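/- For every nonempty finite ≼-chain σ of ordered pairs of topes on a finite type E, the image ρ(σ) = {ρ(x) : x ∈ σ} is again a nonempty finite ≼-chain, and the induced map σ ↦ ρ(σ) on the poset Δ(Q) of nonempty finite ≼-chains ordered by inclusion is an order-preserving bijection whose fourth iterate is the identity. Consequently n ↦ ρⁿ defines an action of ℤ/4ℤ on Δ(Q). -/

import Mathlib

/-- The separation set `S(X,Y)` of two sign vectors. -/
def SepSet {E : Type*} (X Y : E → SignType) : Set E := {e | X e = -(Y e) ∧ X e ≠ 0}

/-- A tope on `E`: a sign vector with full support. -/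
abbrev Tope (E : Type*) : Type _ := { X : E → SignType // ∀ e, X e ≠ 0 }

instance {E : Type*} : Neg (Tope E) :=
  ⟨fun X => ⟨-X.1, fun e h => X.2 e (by revert h; cases hx : X.1 e <;> simp [hx])⟩⟩

/-- The order relation of the tope-pair poset `Q`:
`(T,R) ≼ (T′,R′)` iff `S(T′,T) ⊆ S(T′,R)` and `S(T′,R) ⊆ S(T′,R′)`. -/
def QLE {E : Type*} (p q : Tope E × Tope E) : Prop :=
  SepSet q.1.1 p.1.1 ⊆ SepSet q.1.1 p.2.1 ∧ SepSet q.1.1 p.2.1 ⊆ SepSet q.1.1 q.2.1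

/-- The map `ρ(R,T) = (-T,R)`. -/
def rho {E : Type*} (p : Tope E × Tope E) : Tope E × Tope E := (-p.2, p.1)

/-- `Δ(Q)`: the poset of nonempty finite `≼`-chains of pairs of topes,
ordered by inclusion. -/
abbrev ChainQ (E : Type*) : Type _ :=
  { s : Finset (Tope E × Tope E) // s.Nonempty ∧ IsChain QLE (s : Set (Tope E × Tope E)) }

/-! On topes, `e ∈ S(X,Y)` just says `X e ≠ Y e`, and every coordinate takes one of only two
values. A coordinatewise check with these facts shows that `ρ` reverses `≼`, so it maps chains to
chains. Since `ρ⁴ = id`, the induced map on `Δ(Q)` is a permutation whose fourth power is trivial,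
which is the same thing as an action of `ℤ/4ℤ`. -/

def Equiv.Perm.ofIterateEqId {α : Type*} {f : α → α} {n : ℕ} (h : f^[n + 1] = id) :
    Equiv.Perm α where
  toFun := f
  invFun := f^[n]
  left_inv x := by rw [← Function.iterate_succ_apply, h, id]
  right_inv x := by rw [← Function.iterate_succ_apply' f, h, id]

lemma Equiv.Perm.ofIterateEqId_pow {α : Type*} {f : α → α} {n : ℕ} (h : f^[n + 1] = id) :
    Equiv.Perm.ofIterateEqId h ^ (n + 1) = 1 := by
  ext x
  rw [Equiv.Perm.coe_pow]
  exact congrFun h x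

lemma exists_zmod_monoidHom_of_pow_eq_one {G : Type*} [Group G] {n : ℕ} {g : G} (hg : g ^ n = 1) :
    ∃ φ : Multiplicative (ZMod n) →* G, φ (Multiplicative.ofAdd 1) = g := by
  have hf : zmultiplesHom (Additive G) (Additive.ofMul g) n = 0 := by
    rw [zmultiplesHom_apply, natCast_zsmul, ← ofMul_pow, hg, ofMul_one]
  refine ⟨AddMonoidHom.toMultiplicativeLeft (ZMod.lift n ⟨_, hf⟩), ?_⟩
  have h1 : ZMod.lift n ⟨_, hf⟩ 1 = Additive.ofMul g := by simpa using ZMod.lift_coe n ⟨_, hf⟩ 1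
  exact congrArg Additive.toMul h1

namespace SignType

lemma eq_of_ne_of_ne {a b c : SignType} (ha : a ≠ 0) (hb : b ≠ 0) (hc : c ≠ 0)
    (hab : a ≠ b) (hac : a ≠ c) : b = c := by
  cases a <;> cases b <;> cases c <;> simp_all

lemma neg_eq_iff_ne {a b : SignType} (ha : a ≠ 0) (hb : b ≠ 0) : -a = b ↔ a ≠ b := by
  cases a <;> cases b <;> simp_all

end SignType

namespace Tope

variable {E : Type*}

@[simp]
lemma neg_val (X : Tope E) : (-X).1 = -X.1 := rfl

@[simp]
lemma neg_neg (X : Tope E) : -(-X) = X :=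
  Subtype.ext (_root_.neg_neg X.1)

lemma mem_sepSet_iff {X Y : Tope E} {e : E} : e ∈ SepSet X.1 Y.1 ↔ X.1 e ≠ Y.1 e := by
  have hX := X.2 e
  have hY := Y.2 e
  simp only [SepSet, Set.mem_ofPred_eq]
  cases hx : X.1 e <;> cases hy : Y.1 e <;> simp_all

end Tope

section

variable {E : Type*}

lemma qle_iff {p q : Tope E × Tope E} : QLE p q ↔
    ∀ e, (q.1.1 e ≠ p.1.1 e → q.1.1 e ≠ p.2.1 e) ∧ (q.1.1 e ≠ p.2.1 e → q.1.1 e ≠ q.2.1 e) := by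
  simp only [QLE, Set.subset_def, Tope.mem_sepSet_iff, forall_and]

lemma rho_iterate_four : (rho : Tope E × Tope E → Tope E × Tope E)^[4] = id := by
  funext p
  simp [rho]

lemma QLE.rho {p q : Tope E × Tope E} (h : QLE p q) : QLE (rho q) (rho p) := by
  rw [qle_iff] at h ⊢
  intro e
  obtain ⟨h₁, h₂⟩ := h e
  simp only [_root_.rho, Tope.neg_val, Pi.neg_apply, ne_eq, neg_inj]
  rw [SignType.neg_eq_iff_ne (p.2.2 e) (q.1.2 e), SignType.neg_eq_iff_ne (p.2.2 e) (p.1.2 e),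
    not_not, not_not]
  refine ⟨fun hpq => ?_, fun hpq => ?_⟩
  · by_contra hpq'
    exact h₂ (Ne.symm hpq') (SignType.eq_of_ne_of_ne (p.2.2 e) (q.1.2 e) (q.2.2 e) hpq' hpq)
  · by_contra hpp
    exact h₁ (fun h => hpp (hpq.trans h)) hpq.symm

lemma IsChain.image_rho {s : Set (Tope E × Tope E)} (hs : IsChain QLE s) :
    IsChain QLE (rho '' s) :=
  (hs.image_of_map_rel QLE (flip QLE) rho fun _ _ h => h.rho).symm

variable [Fintype E]

lemma IsChain.finset_image_rho {s : Finset (Tope E × Tope E)}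
    (hs : IsChain QLE (s : Set (Tope E × Tope E))) :
    IsChain QLE ((s.image rho : Finset (Tope E × Tope E)) : Set (Tope E × Tope E)) := by
  rw [Finset.coe_image]
  exact hs.image_rho

def ChainQ.rho (σ : ChainQ E) : ChainQ E :=
  ⟨σ.1.image _root_.rho, σ.2.1.image _, σ.2.2.finset_image_rho⟩

lemma ChainQ.rho_iterate_four : (ChainQ.rho (E := E))^[4] = id := by
  funext σ
  apply Subtype.ext
  simp only [Function.iterate_succ, Function.iterate_zero, Function.comp_apply, id, ChainQ.rho,
    Finset.image_image]
  exact (congrArg (Finset.image · σ.1) _root_.rho_iterate_four).trans Finset.image_id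

end

theorem rho_action_on_chains_general (E : Type*) [Fintype E] :
    (∀ s : Finset (Tope E × Tope E), s.Nonempty → IsChain QLE (s : Set (Tope E × Tope E)) →
      (s.image rho).Nonempty ∧ IsChain QLE ((s.image rho : Finset (Tope E × Tope E)) :
        Set (Tope E × Tope E))) ∧
    (∃ F : ChainQ E → ChainQ E,
      (∀ σ : ChainQ E, (F σ).1 = σ.1.image rho) ∧
      Function.Bijective F ∧
      (∀ σ τ : ChainQ E, σ.1 ⊆ τ.1 → (F σ).1 ⊆ (F τ).1) ∧
      F^[4] = id) ∧
    (∃ φ : Multiplicative (ZMod 4) →* Equiv.Perm (ChainQ E),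
      ∀ σ : ChainQ E, ((φ (Multiplicative.ofAdd 1)) σ).1 = σ.1.image rho) := by
  have hperiod := ChainQ.rho_iterate_four (E := E)
  obtain ⟨φ, hφ⟩ := exists_zmod_monoidHom_of_pow_eq_one (Equiv.Perm.ofIterateEqId_pow hperiod)
  refine ⟨fun s hs hc => ⟨hs.image rho, hc.finset_image_rho⟩, ?_, φ, fun σ => by rw [hφ]; rfl⟩
  exact ⟨ChainQ.rho, fun _ => rfl, (Equiv.Perm.ofIterateEqId hperiod).bijective,
    fun _ _ => Finset.image_subset_image, hperiod⟩

/-- `ρ` maps nonempty `≼`-chains to nonempty `≼`-chains, the induced map on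
`Δ(Q)` is an inclusion-preserving bijection whose fourth iterate is the
identity, and consequently `n ↦ ρⁿ` gives an action of `ℤ/4ℤ` on `Δ(Q)`. -/
theorem rho_action_on_chains (E : Type*) [Fintype E] [DecidableEq E] :
    (∀ s : Finset (Tope E × Tope E), s.Nonempty → IsChain QLE (s : Set (Tope E × Tope E)) →
      (s.image rho).Nonempty ∧ IsChain QLE ((s.image rho : Finset (Tope E × Tope E)) :
        Set (Tope E × Tope E))) ∧
    (∃ F : ChainQ E → ChainQ E,
      (∀ σ : ChainQ E, (F σ).1 = σ.1.image rho) ∧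
      Function.Bijective F ∧
      (∀ σ τ : ChainQ E, σ.1 ⊆ τ.1 → (F σ).1 ⊆ (F τ).1) ∧
      F^[4] = id) ∧
    (∃ φ : Multiplicative (ZMod 4) →* Equiv.Perm (ChainQ E),
      ∀ σ : ChainQ E, ((φ (Multiplicative.ofAdd 1)) σ).1 = σ.1.image rho) :=
  rho_action_on_chains_general E
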